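/- If z : [0,∞) → ℂ is differentiable with bounded derivative (‖z'(t)‖ ≤ M for all t) and ∫₀^∞ |z(t)|⁴ dt < ∞, then lim_{t→∞} z(t) = 0. -/

import Mathlib

/-! A Barbalat-type argument. By the mean value theorem `z` is Lipschitz, hence uniformly
continuous, on `[0, ∞)`. So if `‖z x‖ ≥ ε`, then `‖z‖ ≥ ε / 2` on a window `[x, x + η]` whose
length `η` depends only on `ε`, and `∫ₓ^{x+η} ‖z‖⁴ ≥ (ε / 2)⁴ η`. Integrability of `‖z‖⁴` forces
these window integrals to tend to `0`, so this can only happen for bounded `x`. -/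

open MeasureTheory Filter Set Topology

theorem MeasureTheory.IntegrableOn.intervalIntegrable_of_Ioi {E : Type*} [NormedAddCommGroup E]
    {g : ℝ → E} {a b c : ℝ} (hg : IntegrableOn g (Ioi a)) (hab : a ≤ b) (hbc : b ≤ c) :
    IntervalIntegrable g volume b c :=
  (intervalIntegrable_iff_integrableOn_Ioc_of_le hbc).2
    (hg.mono_set fun _ ht => hab.trans_lt ht.1)

theorem tendsto_intervalIntegral_add_atTop_zero {E : Type*} [NormedAddCommGroup E]
    [NormedSpace ℝ E] {g : ℝ → E} {a : ℝ} (hg : IntegrableOn g (Ioi a)) (δ : ℝ) :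
    Tendsto (fun x => ∫ t in x..x + δ, g t) atTop (𝓝 0) := by
  have hlim := (intervalIntegral_tendsto_integral_Ioi a hg
    (tendsto_atTop_add_const_right _ δ tendsto_id)).sub
    (intervalIntegral_tendsto_integral_Ioi a hg tendsto_id)
  simp only [id, sub_self] at hlim
  refine hlim.congr' ?_
  filter_upwards [eventually_ge_atTop a, eventually_ge_atTop (a - δ)] with x hx hxδ
  exact intervalIntegral.integral_interval_sub_left
    (hg.intervalIntegrable_of_Ioi le_rfl (by linarith)) (hg.intervalIntegrable_of_Ioi le_rfl hx)

theorem UniformContinuousOn.tendsto_zero_of_integrableOn_norm_pow {E : Type*}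
    [NormedAddCommGroup E] {f : ℝ → E} {a : ℝ} {p : ℕ} (hf : UniformContinuousOn f (Ici a))
    (hfp : IntegrableOn (fun t => ‖f t‖ ^ p) (Ioi a)) : Tendsto f atTop (𝓝 0) := by
  rw [Metric.tendsto_atTop]
  intro ε hε
  obtain ⟨δ, hδ, hfδ⟩ := Metric.uniformContinuousOn_iff.1 hf (ε / 2) (half_pos hε)
  have hwindow := (tendsto_intervalIntegral_add_atTop_zero hfp (δ / 2)).eventually
    (gt_mem_nhds (show (0 : ℝ) < (ε / 2) ^ p * (δ / 2) by positivity))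
  obtain ⟨N, hN⟩ := (hwindow.and (eventually_ge_atTop a)).exists_forall_of_atTop
  refine ⟨N, fun x hx => ?_⟩
  obtain ⟨hwindow_x, hax⟩ := hN x hx
  rw [dist_zero_right]
  by_contra! hεx
  have hlower : ∀ t ∈ Icc x (x + δ / 2), ε / 2 ≤ ‖f t‖ := by
    intro t ht
    have hdist : dist x t < δ := by
      rw [Real.dist_eq, abs_sub_comm, abs_of_nonneg (by linarith [ht.1])]
      linarith [ht.2]
    have hclose := hfδ x hax t (hax.trans ht.1) hdist
    rw [dist_eq_norm] at hclose
    linarith [norm_sub_norm_le (f x) (f t)]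
  have hle : x ≤ x + δ / 2 := by linarith
  have hbig := intervalIntegral.integral_mono_on hle intervalIntegrable_const
    (hfp.intervalIntegrable_of_Ioi hax hle)
    fun t ht => pow_le_pow_left₀ (by positivity) (hlower t ht) p
  rw [intervalIntegral.integral_const, smul_eq_mul, add_sub_cancel_left] at hbig
  linarith

theorem L4_plus_bounded_derivative_tendsto_zero
    (z : ℝ → ℂ) (M : ℝ)
    (hdiff : Differentiable ℝ z)
    (hM : ∀ t : ℝ, 0 ≤ t → ‖deriv z t‖ ≤ M)
    (hL4 : IntegrableOn (fun t => ‖z t‖ ^ 4) (Set.Ioi (0 : ℝ))) :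
    Tendsto z atTop (nhds 0) := by
  have hlip : LipschitzOnWith M.toNNReal z (Ici 0) :=
    (convex_Ici 0).lipschitzOnWith_of_nnnorm_deriv_le (fun t _ => hdiff t) fun t ht => by
      rw [← NNReal.coe_le_coe, coe_nnnorm]
      exact (hM t ht).trans M.le_coe_toNNReal
  exact hlip.uniformContinuousOn.tendsto_zero_of_integrableOn_norm_pow hL4
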